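/- arXiv:1407.5433 — 2 statements merged into one kernel-verified Lean document; each statement's English description precedes it below -/
import Mathlib

section
/- The coefficient of q^{3n+2} in the formal power series expansion of 1/ψ(q)^8 is divisible by 9, for every n ≥ 0. -/
open PowerSeries

/-- Coefficientwise: `(q^j; q^j)_∞`, the Euler product with `q` replaced by `q^j`. -/
noncomputable def eulerSub (j : ℕ) : PowerSeries ℤ :=
  PowerSeries.mk fun n =>
    PowerSeries.coeff n (∏ k ∈ Finset.range (n + 1), (1 - PowerSeries.X ^ (j * (k + 1))))

open scoped Classical in
/-- `ψ(q^j)` where `ψ(q) = Σ_{k≥0} q^{k(k+1)/2}`. -/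
noncomputable def psiSub (j : ℕ) : PowerSeries ℤ :=
  PowerSeries.mk fun n => if ∃ k, j * (k * (k + 1) / 2) = n then 1 else 0

/-- `A(q^j)` where `A(q) = (q^2;q^2)_∞ (q^3;q^3)_∞^2 / ((q;q)_∞ (q^6;q^6)_∞)`. -/
noncomputable def ASub (j : ℕ) : PowerSeries ℤ :=
  eulerSub (2 * j) * eulerSub (3 * j) ^ 2 *
    PowerSeries.invOfUnit (eulerSub j * eulerSub (6 * j)) 1

/-- `ψ(-q)`. -/
noncomputable def psiNeg : PowerSeries ℤ :=
  PowerSeries.mk fun n => (-1) ^ n * PowerSeries.coeff n (psiSub 1)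

/-- `pod_{-3}(n)`, defined by `Σ pod_{-3}(n) q^n = 1/ψ(-q)^3`. -/
noncomputable def pod3 (n : ℕ) : ℤ :=
  PowerSeries.coeff n (PowerSeries.invOfUnit (psiNeg ^ 3) 1)

/-- `pod(n) = pod_{-1}(n)`, defined by `Σ pod(n) q^n = 1/ψ(-q)`. -/
noncomputable def pod1 (n : ℕ) : ℤ :=
  PowerSeries.coeff n (PowerSeries.invOfUnit psiNeg 1)

/-- `t_k(n)`: number of ordered `k`-tuples of triangular numbers summing to `n`. -/
noncomputable def triRep (k n : ℕ) : ℕ :=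
  Set.ncard {v : Fin k → ℕ | (∀ i, ∃ m, m * (m + 1) / 2 = v i) ∧ ∑ i, v i = n}

/-- `r_k(n)`: number of representations of `n` as an ordered sum of `k` squares. -/
noncomputable def sqRep (k n : ℕ) : ℕ :=
  Set.ncard {x : Fin k → ℤ | ∑ i, (x i) ^ 2 = (n : ℤ)}

/-!
Modulo 9 we have `ψ(q)^9 ≡ ψ(q^3)^3`: the Frobenius congruence `f(q)^3 ≡ f(q^3) (mod 3)` lifted
by `a ≡ b (mod 3) ⇒ a^3 ≡ b^3 (mod 9)`. Multiplying `ψ^8 · ψ^{-8} = 1` by `ψ` then gives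
`ψ^{-8} ≡ ψ(q^3)^{-3} · ψ(q) (mod 9)`. The first factor only has terms `q^{3k}`, and `ψ` has no
terms `q^{3n+2}` since a triangular number is never `2 mod 3`.
-/

namespace PowerSeries

variable {R : Type*}

theorem C_dvd_iff_dvd_coeff [Semiring R] (r : R) (φ : R⟦X⟧) :
    C r ∣ φ ↔ ∀ n, r ∣ coeff n φ := by
  constructor
  · rintro ⟨ψ, rfl⟩ n
    rw [coeff_C_mul]
    exact dvd_mul_right r _
  · intro h
    choose c hc using h
    exact ⟨mk c, by ext n; rw [coeff_C_mul, coeff_mk, hc]⟩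

theorem coeff_expand_mul_eq_zero [CommRing R] {p r : ℕ} (hp : p ≠ 0) (g : R⟦X⟧) {f : R⟦X⟧}
    (hf : ∀ n, n % p = r → coeff n f = 0) {n : ℕ} (hn : n % p = r) :
    coeff n (expand p hp g * f) = 0 := by
  rw [coeff_mul]
  refine Finset.sum_eq_zero fun ⟨i, j⟩ hij => ?_
  rw [Finset.HasAntidiagonal.mem_antidiagonal] at hij
  by_cases hi : p ∣ i
  · obtain ⟨c, rfl⟩ := hi
    rw [hf j (by rwa [← hij, Nat.mul_add_mod] at hn), mul_zero]
  · rw [coeff_expand_of_not_dvd p hp g hi, zero_mul]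

theorem expand_zmod_eq_pow (p : ℕ) [hp : Fact p.Prime] (f : (ZMod p)⟦X⟧) :
    expand p hp.out.ne_zero f = f ^ p := by
  have := MvPowerSeries.map_frobenius_expand p hp.out.ne_zero (f := f)
  rwa [ZMod.frobenius_zmod, MvPowerSeries.map_id] at this

theorem natCast_dvd_pow_sub_expand (p : ℕ) [hp : Fact p.Prime] (f : ℤ⟦X⟧) :
    (p : ℤ⟦X⟧) ∣ f ^ p - expand p hp.out.ne_zero f := by
  rw [← map_natCast C, C_dvd_iff_dvd_coeff]
  intro n
  rw [← ZMod.intCast_zmod_eq_zero_iff_dvd, ← eq_intCast (Int.castRingHom (ZMod p)), ← coeff_map,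
    map_sub, map_pow, map_expand, expand_zmod_eq_pow, sub_self, map_zero]

theorem natCast_pow_succ_dvd_pow_sub_expand (p : ℕ) [hp : Fact p.Prime] (f : ℤ⟦X⟧) (k : ℕ) :
    (p : ℤ⟦X⟧) ^ (k + 1) ∣ f ^ p ^ (k + 1) - expand p hp.out.ne_zero (f ^ p ^ k) := by
  have := dvd_sub_pow_of_dvd_sub (natCast_dvd_pow_sub_expand p f) k
  rwa [← pow_mul, ← pow_succ', ← map_pow] at this

end PowerSeries

theorem triangle_mod_three_ne_two (k : ℕ) : k * (k + 1) / 2 % 3 ≠ 2 := by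
  have h2 : 2 ∣ k * (k + 1) := (Nat.even_mul_succ_self k).two_dvd
  have h3 : k * (k + 1) % 3 ≠ 1 := by
    rw [Nat.mul_mod, Nat.add_mod]
    have := Nat.mod_lt k (by norm_num : 3 > 0)
    interval_cases k % 3 <;> simp
  omega

theorem constantCoeff_psiSub_one : constantCoeff (psiSub 1) = 1 := by
  rw [psiSub, constantCoeff_mk, if_pos ⟨0, rfl⟩]

theorem coeff_psiSub_one_eq_zero {n : ℕ} (hn : n % 3 = 2) : coeff n (psiSub 1) = 0 := by
  rw [psiSub, coeff_mk, if_neg]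
  rintro ⟨k, rfl⟩
  exact triangle_mod_three_ne_two k (by rwa [one_mul] at hn)

theorem psi_inv_eight_coeff_div_nine (n : ℕ) :
    (9 : ℤ) ∣ PowerSeries.coeff (3 * n + 2) (PowerSeries.invOfUnit (psiSub 1 ^ 8) 1) := by
  set ψ := psiSub 1
  set B := invOfUnit (ψ ^ 8) 1
  set W := invOfUnit (ψ ^ 3) 1
  set E : ℤ⟦X⟧ →ₐ[ℤ] ℤ⟦X⟧ := expand 3 three_ne_zero
  have hB : ψ ^ 8 * B = 1 := mul_invOfUnit _ _ (by simp [ψ, constantCoeff_psiSub_one])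
  have hW : E W * E ψ ^ 3 = 1 := by
    rw [← map_pow, ← map_mul, mul_comm,
      mul_invOfUnit _ _ (by simp [ψ, constantCoeff_psiSub_one]), map_one]
  obtain ⟨h, hh⟩ := natCast_pow_succ_dvd_pow_sub_expand 3 ψ 1
  norm_num at hh
  have hdiv : C (9 : ℤ) ∣ B - E W * ψ :=
    ⟨-(E W * h * B), by rw [map_ofNat]; linear_combination E W * ψ * hB - B * hW - E W * B * hh⟩
  have hvanish : coeff (3 * n + 2) (E W * ψ) = 0 :=
    coeff_expand_mul_eq_zero _ W (r := 2) (fun _ => coeff_psiSub_one_eq_zero) (by omega)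
  simpa [hvanish] using (C_dvd_iff_dvd_coeff _ _).mp hdiv (3 * n + 2)
end

section
/- For all integers n ≥ 0, pod_{-3}(3n+2) ≡ 6 pod(9n+5) (mod 9), where pod(n) = pod_{-1}(n). -/
open PowerSeries

/-!
Write `ψ` for `ψ(-q)` and `E₃ f` for `f(q³)`. Triangular numbers are never `≡ 2 (mod 3)`,
and those `≡ 1` are exactly the numbers `9t + 1` with `t` triangular, so `ψ = a - b` with
`a = W(q³)` and `b = q ψ(q⁹)`. Hence `1/ψ = P / D(q³)` with `P = a² + ab + b²` and
`D(q³) = a³ - b³`. As `P` is given by its 3-dissection, extracting the terms `q^(3n+2)` gives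
`∑ pod(3n+2) qⁿ = ψ(q³)² / D` and `∑ pod₋₃(3n+2) qⁿ = 3 H` with
`H = (2 W⁴ ψ(q³)² + q W ψ(q³)⁵) / D³`. Modulo 3 the Frobenius `f³ ≡ f(q³)` turns `D` into `ψ`,
and then `H ≡ 2 ∑ pod(9n+5) qⁿ`; the factor 3 lifts this to the congruence modulo 9.
-/

local notation "E₃" => PowerSeries.expand 3 three_ne_zero

namespace PowerSeries

variable {R : Type*} [CommRing R]

theorem expand_zmod (p : ℕ) [Fact p.Prime] (f : (ZMod p)⟦X⟧) :
    expand p (Fact.out : p.Prime).ne_zero f = f ^ p := by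
  have h := MvPowerSeries.map_frobenius_expand p (Fact.out : p.Prime).ne_zero (f := f)
  rwa [ZMod.frobenius_zmod, MvPowerSeries.map_id] at h

theorem invOfUnit_eq_of_mul_eq_one {φ ψ : R⟦X⟧} {u : Rˣ} (h : constantCoeff φ = u)
    (hψ : φ * ψ = 1) : invOfUnit φ u = ψ :=
  left_inv_eq_right_inv (invOfUnit_mul φ u h) hψ

noncomputable def multisection (k r : ℕ) : R⟦X⟧ →ₗ[R] R⟦X⟧ where
  toFun f := mk fun n => coeff (k * n + r) f
  map_add' f g := by ext; simp
  map_smul' a f := by ext; simp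

variable {k : ℕ} (hk : k ≠ 0)

@[simp]
theorem coeff_multisection (r n : ℕ) (f : R⟦X⟧) :
    coeff n (multisection k r f) = coeff (k * n + r) f := by
  simp [multisection]

theorem map_multisection {S : Type*} [CommRing S] (φ : R →+* S) (r : ℕ) (f : R⟦X⟧) :
    map φ (multisection k r f) = multisection k r (map φ f) := by
  ext; simp

theorem coeff_X_pow_mul_expand {r s : ℕ} (hr : r < k) (hs : s < k) (n : ℕ) (g : R⟦X⟧) :
    coeff (k * n + r) (X ^ s * expand k hk g) = if s = r then coeff n g else 0 := by
  rw [coeff_X_pow_mul', coeff_expand]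
  by_cases hsr : s = r
  · subst hsr
    simp [Nat.mul_div_cancel_left _ (Nat.pos_of_ne_zero hk)]
  · rw [if_neg hsr]
    split_ifs with hsn hdvd
    · obtain ⟨c, hc⟩ := hdvd
      have : (k * n + r) % k = (k * c + s) % k := by rw [← hc, Nat.sub_add_cancel hsn]
      simp [Nat.mod_eq_of_lt hr, Nat.mod_eq_of_lt hs] at this
      exact absurd this.symm hsr
    all_goals rfl

theorem multisection_sum_X_pow_mul_expand (c : Fin k → R⟦X⟧) (r : Fin k) :
    multisection k r (∑ i : Fin k, X ^ (i : ℕ) * expand k hk (c i)) = c r := by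
  ext n
  simp only [coeff_multisection, map_sum, coeff_X_pow_mul_expand hk r.isLt (Fin.isLt _),
    Fin.val_inj, Finset.sum_ite_eq', Finset.mem_univ, if_true]

theorem sum_X_pow_mul_expand_multisection (f : R⟦X⟧) :
    ∑ i : Fin k, X ^ (i : ℕ) * expand k hk (multisection k i f) = f := by
  ext n
  have hn : n % k < k := Nat.mod_lt n (Nat.pos_of_ne_zero hk)
  rw [← Nat.div_add_mod n k, map_sum]
  simp only [coeff_X_pow_mul_expand hk hn (Fin.isLt _)]
  rw [Finset.sum_eq_single ⟨n % k, hn⟩]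
  · simp
  · intro i _ hi
    rw [if_neg (fun h => hi (Fin.ext h))]
  · simp

theorem multisection_expand_mul {r : ℕ} (hr : r < k) (g f : R⟦X⟧) :
    multisection k r (expand k hk g * f) = g * multisection k r f := by
  conv_lhs => rw [← sum_X_pow_mul_expand_multisection hk f]
  have := multisection_sum_X_pow_mul_expand hk (fun i => g * multisection k i f) ⟨r, hr⟩
  simp only [map_mul] at this
  rw [Finset.mul_sum]
  convert this using 3 with i
  ring

theorem multisection_three_expand_add (a b c : R⟦X⟧) (r : Fin 3) :
    multisection 3 r (E₃ a + X * E₃ b + X ^ 2 * E₃ c) = ![a, b, c] r := by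
  simpa [Fin.sum_univ_three, add_assoc] using
    multisection_sum_X_pow_mul_expand three_ne_zero ![a, b, c] r

theorem multisection_two_cube (u v w : R⟦X⟧) :
    multisection 3 2 ((E₃ u + X * E₃ v + X ^ 2 * E₃ w) ^ 3) =
      3 * (u ^ 2 * w + u * v ^ 2 + X * v * w ^ 2) := by
  have h : (E₃ u + X * E₃ v + X ^ 2 * E₃ w) ^ 3 =
      E₃ (u ^ 3 + X * (v ^ 3 + 6 * u * v * w) + X ^ 2 * w ^ 3)
      + X * E₃ (3 * u ^ 2 * v + X * (3 * u * w ^ 2 + 3 * v ^ 2 * w))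
      + X ^ 2 * E₃ (3 * (u ^ 2 * w + u * v ^ 2 + X * v * w ^ 2)) := by
    simp only [map_add, map_mul, map_pow, map_ofNat, expand_X]
    ring
  rw [h]
  exact multisection_three_expand_add _ _ _ 2

theorem dvd_coeff_sub_of_map_eq {p : ℕ} {f g : ℤ⟦X⟧}
    (h : map (Int.castRingHom (ZMod p)) f = map (Int.castRingHom (ZMod p)) g) (n : ℕ) :
    (p : ℤ) ∣ coeff n g - coeff n f := by
  have h := congrArg (coeff n) h
  simp only [coeff_map, eq_intCast] at h
  exact (ZMod.intCast_eq_intCast_iff_dvd_sub _ _ _).mp h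

end PowerSeries

namespace Pod

theorem two_mul_tri (k : ℕ) : 2 * (k * (k + 1) / 2) = k * (k + 1) :=
  Nat.mul_div_cancel' (Nat.even_mul_succ_self k).two_dvd

theorem tri_mod_three (k : ℕ) : k * (k + 1) / 2 % 3 = if k % 3 = 1 then 1 else 0 := by
  have h := two_mul_tri k
  have hk : k * (k + 1) % 3 = k % 3 * (k % 3 + 1) % 3 := by simp [Nat.mul_mod, Nat.add_mod]
  have : k % 3 < 3 := Nat.mod_lt _ (by norm_num)
  interval_cases hk3 : k % 3 <;> simp at hk ⊢ <;> omega

theorem tri_three_mul_add_one (j : ℕ) :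
    (3 * j + 1) * (3 * j + 1 + 1) / 2 = 9 * (j * (j + 1) / 2) + 1 := by
  have h := two_mul_tri j
  have h' := two_mul_tri (3 * j + 1)
  have : (3 * j + 1) * (3 * j + 1 + 1) = 9 * (j * (j + 1)) + 2 := by ring
  omega

theorem not_exists_tri_eq_three_mul_add_two (m : ℕ) : ¬∃ k, k * (k + 1) / 2 = 3 * m + 2 := by
  rintro ⟨k, hk⟩
  have := tri_mod_three k
  split_ifs at this <;> omega

theorem exists_tri_eq_three_mul_add_one_iff (m : ℕ) :
    (∃ k, k * (k + 1) / 2 = 3 * m + 1) ↔ ∃ j, 3 * (j * (j + 1) / 2) = m := by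
  constructor
  · rintro ⟨k, hk⟩
    have hk3 : k % 3 = 1 := by
      have := tri_mod_three k
      split_ifs at this with h <;> omega
    obtain ⟨j, rfl⟩ : ∃ j, k = 3 * j + 1 := ⟨k / 3, by omega⟩
    exact ⟨j, by rw [tri_three_mul_add_one] at hk; omega⟩
  · rintro ⟨j, rfl⟩
    exact ⟨3 * j + 1, by rw [tri_three_mul_add_one]; ring⟩

open scoped Classical in
theorem coeff_psiNeg (n : ℕ) :
    coeff n psiNeg = (-1) ^ n * if ∃ k, k * (k + 1) / 2 = n then 1 else 0 := by
  simp [psiNeg, psiSub]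

theorem multisection_two_psiNeg : multisection 3 2 psiNeg = 0 := by
  ext m
  simp [coeff_psiNeg, not_exists_tri_eq_three_mul_add_two]

theorem multisection_one_psiNeg : multisection 3 1 psiNeg = -E₃ psiNeg := by
  ext m
  rw [coeff_multisection, coeff_psiNeg, exists_tri_eq_three_mul_add_one_iff, map_neg,
    coeff_expand]
  by_cases hm : 3 ∣ m
  · obtain ⟨j, rfl⟩ := hm
    simp [coeff_psiNeg, pow_succ, pow_mul, apply_ite]
  · simp only [hm, if_false, neg_zero, mul_eq_zero, ite_eq_right_iff]
    exact Or.inr fun ⟨j, hj⟩ => absurd ⟨_, hj.symm⟩ hm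

theorem constantCoeff_psiNeg : constantCoeff psiNeg = 1 := by
  rw [← coeff_zero_eq_constantCoeff_apply, coeff_psiNeg, if_pos ⟨0, rfl⟩]
  norm_num

noncomputable def W : ℤ⟦X⟧ := multisection 3 0 psiNeg

theorem psiNeg_eq : psiNeg = E₃ W - X * E₃ (E₃ psiNeg) := by
  conv_lhs => rw [← sum_X_pow_mul_expand_multisection three_ne_zero psiNeg]
  simp [Fin.sum_univ_three, W, multisection_one_psiNeg, multisection_two_psiNeg, sub_eq_add_neg]

noncomputable def D : ℤ⟦X⟧ := W ^ 3 - X * E₃ (psiNeg ^ 3)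

noncomputable def P : ℤ⟦X⟧ :=
  E₃ (W ^ 2) + X * E₃ (W * E₃ psiNeg) + X ^ 2 * E₃ (E₃ psiNeg ^ 2)

theorem psiNeg_mul_P : psiNeg * P = E₃ D := by
  have hD : E₃ D = E₃ W ^ 3 - (X * E₃ (E₃ psiNeg)) ^ 3 := by
    simp only [D, map_sub, map_mul, map_pow, expand_X]
    ring
  rw [hD]
  conv_lhs => arg 1; rw [psiNeg_eq]
  simp only [P, map_mul, map_pow]
  ring

theorem constantCoeff_D : constantCoeff D = 1 := by
  have hW : constantCoeff W = 1 := by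
    rw [← coeff_zero_eq_constantCoeff_apply, W, coeff_multisection,
      coeff_zero_eq_constantCoeff_apply, constantCoeff_psiNeg]
  simp [D, hW]

noncomputable def G : ℤ⟦X⟧ := invOfUnit psiNeg 1

theorem psiNeg_mul_G : psiNeg * G = 1 :=
  mul_invOfUnit _ _ (by simp [constantCoeff_psiNeg])

noncomputable def Dinv : ℤ⟦X⟧ := invOfUnit D 1

theorem D_mul_Dinv : D * Dinv = 1 :=
  mul_invOfUnit D 1 (by simp [constantCoeff_D])

theorem G_eq : G = P * E₃ Dinv :=
  invOfUnit_eq_of_mul_eq_one (by simp [constantCoeff_psiNeg])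
    (by rw [← mul_assoc, psiNeg_mul_P, ← map_mul, D_mul_Dinv, map_one])

theorem multisection_two_G : multisection 3 2 G = E₃ psiNeg ^ 2 * Dinv := by
  rw [G_eq, mul_comm, multisection_expand_mul three_ne_zero (by norm_num), mul_comm, P]
  congr 1
  exact multisection_three_expand_add _ _ _ 2

noncomputable def H : ℤ⟦X⟧ :=
  (2 * W ^ 4 * E₃ psiNeg ^ 2 + X * W * E₃ psiNeg ^ 5) * Dinv ^ 3

theorem multisection_two_G_cube : multisection 3 2 (G ^ 3) = 3 * H := by
  rw [G_eq, mul_pow, mul_comm, ← map_pow, multisection_expand_mul three_ne_zero (by norm_num), P,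
    multisection_two_cube, H]
  ring

theorem invOfUnit_psiNeg_pow_three : invOfUnit (psiNeg ^ 3) 1 = G ^ 3 :=
  invOfUnit_eq_of_mul_eq_one (by simp [constantCoeff_psiNeg])
    (by rw [← mul_pow, psiNeg_mul_G, one_pow])

local notation "ρ" => PowerSeries.map (Int.castRingHom (ZMod 3))

theorem map_psiNeg : ρ psiNeg = ρ W ^ 3 - X * (ρ psiNeg ^ 3) ^ 3 := by
  conv_lhs => rw [psiNeg_eq]
  simp only [map_sub, map_mul, map_X, map_expand, expand_zmod]

theorem map_D : ρ D = ρ psiNeg := by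
  conv_rhs => rw [map_psiNeg]
  simp only [D, map_sub, map_mul, map_pow, map_X, map_expand, expand_zmod]

theorem map_Dinv : ρ Dinv = ρ G :=
  left_inv_eq_right_inv (a := ρ psiNeg)
    (by rw [mul_comm, ← map_D, ← map_mul, D_mul_Dinv, map_one])
    (by rw [← map_mul, psiNeg_mul_G, map_one])

theorem map_multisection_one_two_G :
    ρ (multisection 3 1 (multisection 3 2 G)) = ρ W * ρ psiNeg ^ 5 * ρ G := by
  have hG : ρ G = E₃ (ρ G) * ρ P := by
    conv_lhs => rw [G_eq]
    rw [map_mul, map_expand, map_Dinv, mul_comm]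
  have hP : multisection 3 1 (ρ P) = ρ W * E₃ (ρ psiNeg) := by
    have hρP : ρ P =
        E₃ (ρ W ^ 2) + X * E₃ (ρ W * E₃ (ρ psiNeg)) + X ^ 2 * E₃ (E₃ (ρ psiNeg) ^ 2) := by
      simp only [P, map_add, map_mul, map_pow, map_X, map_expand]
    rw [hρP]
    exact multisection_three_expand_add _ _ _ 1
  rw [multisection_two_G, map_multisection, map_mul, map_pow, map_expand, map_Dinv,
    ← map_pow (expand 3 three_ne_zero), multisection_expand_mul three_ne_zero (by norm_num)]
  conv_lhs =>
    rw [hG, multisection_expand_mul three_ne_zero (by norm_num), hP, expand_zmod]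
  ring

theorem map_H : ρ H = ρ (2 * multisection 3 1 (multisection 3 2 G)) := by
  have h3 : (3 : (ZMod 3)⟦X⟧) = 0 := by
    rw [← map_ofNat C 3]
    exact map_zero C
  have hpG : ρ psiNeg * ρ G = 1 := by rw [← map_mul, psiNeg_mul_G, map_one]
  simp only [H, map_add, map_mul, map_pow, map_ofNat, map_X, map_expand, map_Dinv,
    map_multisection_one_two_G, expand_zmod]
  -- both sides are `2 W ψ⁴` once `W³ = ψ + X ψ⁹` and `ψ G = 1` are used
  linear_combination (-2 * ρ W * ρ psiNeg ^ 6 * ρ G ^ 3) * map_psiNeg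
    + (X * ρ W * ρ psiNeg ^ 15 * ρ G ^ 3) * h3
    + (2 * ρ W * ρ psiNeg ^ 5 * ρ G * (ρ psiNeg * ρ G + 1)) * hpG

end Pod

theorem pod3_pod_relation_mod_nine (n : ℕ) :
    Int.ModEq 9 (pod3 (3 * n + 2)) (6 * pod1 (9 * n + 5)) := by
  have hpod3 : pod3 (3 * n + 2) = 3 * coeff n Pod.H := by
    rw [pod3, Pod.invOfUnit_psiNeg_pow_three, ← coeff_multisection, Pod.multisection_two_G_cube,
      ← map_ofNat C 3, coeff_C_mul]
  have hpod1 : pod1 (9 * n + 5) = coeff n (multisection 3 1 (multisection 3 2 Pod.G)) := by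
    rw [coeff_multisection, coeff_multisection, pod1, Pod.G]
    ring_nf
  obtain ⟨c, hc⟩ := dvd_coeff_sub_of_map_eq Pod.map_H n
  rw [← map_ofNat C 2, coeff_C_mul, ← hpod1] at hc
  rw [hpod3, Int.modEq_iff_dvd]
  exact ⟨c, by push_cast at hc; linarith⟩
end
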